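/- arXiv:1501.01549 — 3 statements merged into one kernel-verified Lean document; each statement's English description precedes it below -/
import Mathlib

section
/- Let P be a probability mass function on a finite set 𝒳×𝒴 and for each (x,y) with P(x,y) > 0 let ρ^{x,y} be a d×d density matrix; form the ccq-state ρ_{XYR} := Σ_{x,y} P(x,y)·|x⟩⟨x| ⊗ |y⟩⟨y| ⊗ ρ^{x,y}. Then the following are equivalent: (1) there exist density matrices ρ^y such that ρ^{x,y} = ρ^y for all (x,y) with P(x,y) > 0 (the Markov-chain condition X ↔ Y ↔ R); (2) S(X|YR) = H(X|Y); (3) S(R|YX) = S(R|Y); (4) S(X;YR) = I(X;Y). -/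
open scoped BigOperators
open Matrix
open scoped ComplexOrder

noncomputable section

/-- Base-2 Shannon entropy of a finitely supported real function. -/
def shannonEntropy {α : Type*} [Fintype α] (p : α → ℝ) : ℝ :=
  -∑ x, p x * Real.logb 2 (p x)

/-- Von Neumann entropy: base-2 Shannon entropy of the eigenvalue multiset. -/
def vonNeumannEntropy {n : Type*} [Fintype n] [DecidableEq n] (ρ : Matrix n n ℂ) : ℝ :=
  if h : ρ.IsHermitian then shannonEntropy h.eigenvalues else 0

def IsDensityMatrix {n : Type*} [Fintype n] [DecidableEq n] (ρ : Matrix n n ℂ) : Prop :=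
  ρ.PosSemidef ∧ ρ.trace = 1

/-!
Both entropies of a ccq-state split blockwise: `S(ρ_XYR) = ∑ P(x,y) S(ρ^{x,y}) + H(X,Y)` and
`S(ρ_YR) = ∑_y S(∑_x P(x,y) ρ^{x,y})`. Hence `S(X|YR) - H(X|Y)` is minus a sum, over `y`, of
concavity gaps of the von Neumann entropy, and it vanishes iff each gap does. The concavity gap of
a mixture is the average relative entropy of its components to the mixture, and by Klein's
inequality a relative entropy vanishes only when the two states coincide. Klein's inequality is
proved on spectra: the overlaps `|⟨v_j, u_k⟩|²` of two eigenbases form a doubly stochastic matrix,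
and `a log a - a log b ≥ a - b` termwise. The other two conditions rearrange the second one.
-/

open Real InformationTheory

section ShannonEntropy

variable {α : Type*} [Fintype α]

lemma shannonEntropy_eq_sum_negMulLog_div (g : α → ℝ) :
    shannonEntropy g = (∑ i, negMulLog (g i)) / log 2 := by
  simp only [shannonEntropy, negMulLog, logb, Finset.sum_div, ← Finset.sum_neg_distrib]
  congr 1 with i
  ring

lemma shannonEntropy_const_mul (c : ℝ) (g : α → ℝ) :
    shannonEntropy (fun i => c * g i) =
      c * shannonEntropy g - (∑ i, g i) * (c * logb 2 c) := by
  rw [shannonEntropy_eq_sum_negMulLog_div, shannonEntropy_eq_sum_negMulLog_div]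
  simp only [negMulLog_mul, Finset.sum_add_distrib, ← Finset.sum_mul, ← Finset.mul_sum]
  simp only [negMulLog, logb]
  ring

lemma shannonEntropy_eq_neg_sum_map_univ (g : α → ℝ) :
    shannonEntropy g = -((Finset.univ.val.map g).map fun x => x * logb 2 x).sum := by
  rw [shannonEntropy, Multiset.map_map, ← Finset.sum_map_val]
  rfl

lemma shannonEntropy_eq_of_map_univ_eq {β : Type*} [Fintype β] {f : α → ℝ} {g : β → ℝ}
    (h : Finset.univ.val.map f = Finset.univ.val.map g) :
    shannonEntropy f = shannonEntropy g := by
  rw [shannonEntropy_eq_neg_sum_map_univ, shannonEntropy_eq_neg_sum_map_univ, h]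

end ShannonEntropy

section VonNeumannEntropy

variable {n : Type*} [Fintype n] [DecidableEq n]

lemma IsDensityMatrix.isHermitian {ρ : Matrix n n ℂ} (hρ : IsDensityMatrix ρ) : ρ.IsHermitian :=
  hρ.1.isHermitian

lemma Matrix.IsHermitian.eq_eigenvectorUnitary_mul_diagonal_mul_star {A : Matrix n n ℂ}
    (hA : A.IsHermitian) :
    A = (hA.eigenvectorUnitary : Matrix n n ℂ) *
      diagonal (fun i => (hA.eigenvalues i : ℂ)) * star (hA.eigenvectorUnitary : Matrix n n ℂ) :=
  hA.spectral_theorem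

lemma Matrix.IsHermitian.star_eigenvectorUnitary_mul_mul_eigenvectorUnitary {A : Matrix n n ℂ}
    (hA : A.IsHermitian) :
    star (hA.eigenvectorUnitary : Matrix n n ℂ) * A * (hA.eigenvectorUnitary : Matrix n n ℂ) =
      diagonal (fun i => (hA.eigenvalues i : ℂ)) := by
  simpa [Function.comp_def] using hA.conjStarAlgAut_star_eigenvectorUnitary

lemma Matrix.IsHermitian.sum_eigenvalues_eq_one {A : Matrix n n ℂ} (hA : A.IsHermitian)
    (htr : A.trace = 1) : ∑ i, hA.eigenvalues i = 1 := by
  have := congrArg Complex.re hA.trace_eq_sum_eigenvalues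
  simpa [htr] using this.symm

open Polynomial in
lemma vonNeumannEntropy_unitary_mul_diagonal_mul_star {U : Matrix n n ℂ}
    (hU : U ∈ unitaryGroup n ℂ) (f : n → ℝ) :
    vonNeumannEntropy (U * diagonal (fun i => (f i : ℂ)) * star U) = shannonEntropy f := by
  have hA : (U * diagonal (fun i => (f i : ℂ)) * star U).IsHermitian :=
    isHermitian_mul_mul_conjTranspose U
      (by simp [IsHermitian, diagonal_conjTranspose, Pi.star_def])
  have hchar :
      (U * diagonal (fun i => (f i : ℂ)) * star U).charpoly = ∏ i, (X - C (f i : ℂ)) := by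
    rw [charpoly_mul_comm, ← Matrix.mul_assoc, mem_unitaryGroup_iff'.mp hU, Matrix.one_mul,
      charpoly_diagonal]
  have hroots := hA.roots_charpoly_eq_eigenvalues
  rw [hchar, roots_prod _ _ (by simp [Finset.prod_ne_zero_iff, X_sub_C_ne_zero])] at hroots
  rw [vonNeumannEntropy, dif_pos hA]
  refine shannonEntropy_eq_of_map_univ_eq ?_
  have := congrArg (Multiset.map Complex.re) hroots
  simpa [Multiset.map_map, Function.comp_def] using this.symm

lemma vonNeumannEntropy_zero : vonNeumannEntropy (0 : Matrix n n ℂ) = 0 := by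
  simpa [shannonEntropy] using
    vonNeumannEntropy_unitary_mul_diagonal_mul_star (one_mem (unitaryGroup n ℂ)) (0 : n → ℝ)

lemma vonNeumannEntropy_blockDiagonal {o : Type*} [Fintype o] [DecidableEq o]
    (M : o → Matrix n n ℂ) (hM : ∀ k, (M k).IsHermitian) :
    vonNeumannEntropy (blockDiagonal M) = ∑ k, vonNeumannEntropy (M k) := by
  set U : o → Matrix n n ℂ := fun k => (hM k).eigenvectorUnitary
  have hU : blockDiagonal U ∈ unitaryGroup (n × o) ℂ := by
    rw [mem_unitaryGroup_iff, star_eq_conjTranspose, blockDiagonal_conjTranspose,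
      ← blockDiagonal_mul]
    simp only [← star_eq_conjTranspose, U, mem_unitaryGroup_iff.mp (hM _).eigenvectorUnitary.2]
    exact blockDiagonal_one
  have hdecomp : blockDiagonal M = blockDiagonal U *
      diagonal (fun ik : n × o => ((hM ik.2).eigenvalues ik.1 : ℂ)) * star (blockDiagonal U) := by
    rw [← blockDiagonal_diagonal (fun k i => ((hM k).eigenvalues i : ℂ)), star_eq_conjTranspose,
      blockDiagonal_conjTranspose, ← blockDiagonal_mul, ← blockDiagonal_mul]
    congr 1 with k : 1
    exact (hM k).eq_eigenvectorUnitary_mul_diagonal_mul_star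
  rw [hdecomp, vonNeumannEntropy_unitary_mul_diagonal_mul_star hU]
  simp only [vonNeumannEntropy, dif_pos (hM _), shannonEntropy, Fintype.sum_prod_type,
    ← Finset.sum_neg_distrib]
  exact Finset.sum_comm

lemma vonNeumannEntropy_real_smul {A : Matrix n n ℂ} (hA : A.IsHermitian) (htr : A.trace = 1)
    (c : ℝ) :
    vonNeumannEntropy ((c : ℂ) • A) = c * vonNeumannEntropy A - c * logb 2 c := by
  have hdecomp : (c : ℂ) • A = (hA.eigenvectorUnitary : Matrix n n ℂ) *
      diagonal (fun i => ((c * hA.eigenvalues i : ℝ) : ℂ)) *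
      star (hA.eigenvectorUnitary : Matrix n n ℂ) := by
    conv_lhs => rw [hA.eq_eigenvectorUnitary_mul_diagonal_mul_star]
    have hdiag : diagonal (fun i => ((c * hA.eigenvalues i : ℝ) : ℂ)) =
        (c : ℂ) • diagonal (fun i => (hA.eigenvalues i : ℂ)) := by
      rw [← diagonal_smul]
      congr 1 with i
      simp
    rw [hdiag, Matrix.mul_smul, Matrix.smul_mul]
  rw [hdecomp, vonNeumannEntropy_unitary_mul_diagonal_mul_star hA.eigenvectorUnitary.2,
    shannonEntropy_const_mul, hA.sum_eigenvalues_eq_one htr, vonNeumannEntropy, dif_pos hA]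
  ring

lemma trace_mul_cfc {A : Matrix n n ℂ} (hA : A.IsHermitian) (B : Matrix n n ℂ) (f : ℝ → ℝ) :
    (B * cfc f A).trace = ∑ j, (star (hA.eigenvectorUnitary : Matrix n n ℂ) * B *
      (hA.eigenvectorUnitary : Matrix n n ℂ)) j j * f (hA.eigenvalues j) := by
  rw [hA.cfc_eq, IsHermitian.cfc, Unitary.conjStarAlgAut_apply, ← Matrix.mul_assoc,
    trace_mul_cycle, ← Matrix.mul_assoc]
  simp [Matrix.trace, Matrix.mul_diagonal]

lemma vonNeumannEntropy_mul_log_two {A : Matrix n n ℂ} (hA : A.IsHermitian) :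
    vonNeumannEntropy A * log 2 = -(A * cfc log A).trace.re := by
  rw [trace_mul_cfc hA, hA.star_eigenvectorUnitary_mul_mul_eigenvectorUnitary, vonNeumannEntropy,
    dif_pos hA, shannonEntropy_eq_sum_negMulLog_div, div_mul_cancel₀ _ (log_pos one_lt_two).ne']
  simp [negMulLog, Finset.sum_neg_distrib]

end VonNeumannEntropy

section DoublyStochastic

lemma mul_log_sub_log_sub_sub_eq_mul_klFun (a : ℝ) {b : ℝ} (hb : 0 < b) :
    a * (log a - log b) - (a - b) = b * klFun (a / b) := by
  rcases eq_or_ne a 0 with rfl | ha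
  · simp [klFun]
  rw [klFun, log_div ha hb.ne']
  field_simp
  ring

variable {n : Type*} [Fintype n] [DecidableEq n]

lemma sum_mul_log_sub_sum_mulVec_mul_log {w : Matrix n n ℝ} (hw : w ∈ doublyStochastic ℝ n)
    {a b : n → ℝ} (hab : ∑ k, a k = ∑ j, b j) :
    ∑ k, a k * log (a k) - ∑ j, (w *ᵥ a) j * log (b j) =
      ∑ j, ∑ k, w j k * (a k * (log (a k) - log (b j)) - (a k - b j)) := by
  have hcol : ∀ k, ∑ j, w j k = 1 := sum_col_of_mem_doublyStochastic hw
  have hrow : ∀ j, ∑ k, w j k = 1 := sum_row_of_mem_doublyStochastic hw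
  have expand : ∀ j k, w j k * (a k * (log (a k) - log (b j)) - (a k - b j)) =
      w j k * (a k * log (a k)) - w j k * a k * log (b j) - w j k * a k + w j k * b j :=
    fun j k => by ring
  simp only [expand, Finset.sum_add_distrib, Finset.sum_sub_distrib, mulVec, dotProduct,
    Finset.sum_mul]
  rw [Finset.sum_comm (f := fun j k => w j k * (a k * log (a k))),
    Finset.sum_comm (f := fun j k => w j k * a k)]
  simp only [← Finset.sum_mul, hcol, hrow, one_mul, hab]
  ring

lemma klein_term_nonneg {w a b : ℝ} (hw : 0 ≤ w) (ha : 0 ≤ a) (hb : 0 ≤ b)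
    (hsupp : b = 0 → w * a = 0) :
    0 ≤ w * (a * (log a - log b) - (a - b)) := by
  rcases hb.eq_or_lt with rfl | hb
  · have : w * (a * (log a - log 0) - (a - 0)) = w * a * (log a - 1) := by rw [log_zero]; ring
    rw [this, hsupp rfl, zero_mul]
  · rw [mul_log_sub_log_sub_sub_eq_mul_klFun a hb]
    exact mul_nonneg hw (mul_nonneg hb.le (klFun_nonneg (div_nonneg ha hb.le)))

lemma eq_of_klein_term_eq_zero {w a b : ℝ} (hw : w ≠ 0) (ha : 0 ≤ a) (hb : 0 ≤ b)
    (hsupp : b = 0 → w * a = 0) (h : w * (a * (log a - log b) - (a - b)) = 0) : a = b := by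
  rcases hb.eq_or_lt with rfl | hb
  · exact (mul_eq_zero.mp (hsupp rfl)).resolve_left hw
  · rw [mul_log_sub_log_sub_sub_eq_mul_klFun a hb] at h
    have := (klFun_eq_zero_iff (div_nonneg ha hb.le)).mp
      ((mul_eq_zero.mp ((mul_eq_zero.mp h).resolve_left hw)).resolve_left hb.ne')
    exact (div_eq_one_iff_eq hb.ne').mp this

/-- Klein's inequality for the spectra of `ρ` and `σ`: `w j k = |⟨v_j, u_k⟩|²` for eigenbases
`u` of `ρ` and `v` of `σ`, so that `w *ᵥ a` is the diagonal of `ρ` in the eigenbasis of `σ`. -/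
lemma sum_mulVec_mul_log_le {w : Matrix n n ℝ} (hw : w ∈ doublyStochastic ℝ n)
    {a b : n → ℝ} (ha : 0 ≤ a) (hb : 0 ≤ b) (hab : ∑ k, a k = ∑ j, b j)
    (hsupp : ∀ j, b j = 0 → (w *ᵥ a) j = 0) :
    ∑ j, (w *ᵥ a) j * log (b j) ≤ ∑ k, a k * log (a k) ∧
      (∑ j, (w *ᵥ a) j * log (b j) = ∑ k, a k * log (a k) →
        ∀ j k, w j k ≠ 0 → a k = b j) := by
  have hsupp' : ∀ j k, b j = 0 → w j k * a k = 0 := fun j k hbj =>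
    (Finset.sum_eq_zero_iff_of_nonneg fun k _ =>
      mul_nonneg (nonneg_of_mem_doublyStochastic hw) (ha k)).mp (hsupp j hbj) k
      (Finset.mem_univ k)
  have hterm : ∀ j k, 0 ≤ w j k * (a k * (log (a k) - log (b j)) - (a k - b j)) :=
    fun j k => klein_term_nonneg (nonneg_of_mem_doublyStochastic hw) (ha k) (hb j) (hsupp' j k)
  have hgap := sum_mul_log_sub_sum_mulVec_mul_log hw hab
  refine ⟨?_, fun heq j k hjk => ?_⟩
  · have := Finset.sum_nonneg fun j (_ : j ∈ Finset.univ) =>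
      Finset.sum_nonneg fun k (_ : k ∈ Finset.univ) => hterm j k
    linarith
  · rw [heq, sub_self, eq_comm, Finset.sum_eq_zero_iff_of_nonneg fun j _ =>
      Finset.sum_nonneg fun k _ => hterm j k] at hgap
    have := (Finset.sum_eq_zero_iff_of_nonneg fun k _ => hterm j k).mp
      (hgap j (Finset.mem_univ j)) k (Finset.mem_univ k)
    exact eq_of_klein_term_eq_zero hjk (ha k) (hb j) (hsupp' j k) this

end DoublyStochastic

section Unitary

variable {n : Type*} [Fintype n] [DecidableEq n]

lemma map_normSq_mem_doublyStochastic {U : Matrix n n ℂ} (hU : U ∈ unitaryGroup n ℂ) :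
    U.map Complex.normSq ∈ doublyStochastic ℝ n := by
  have hrow : ∀ j, ((∑ k, Complex.normSq (U j k) : ℝ) : ℂ) = (U * star U) j j := fun j => by
    simp [Matrix.mul_apply, Complex.mul_conj]
  have hcol : ∀ k, ((∑ j, Complex.normSq (U j k) : ℝ) : ℂ) = (star U * U) k k := fun k => by
    simp [Matrix.mul_apply, Complex.normSq_eq_conj_mul_self]
  refine mem_doublyStochastic_iff_sum.mpr ⟨fun j k => Complex.normSq_nonneg _,
    fun j => ?_, fun k => ?_⟩
  · have := hrow j
    rw [mem_unitaryGroup_iff.mp hU, one_apply_eq] at this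
    exact_mod_cast this
  · have := hcol k
    rw [mem_unitaryGroup_iff'.mp hU, one_apply_eq] at this
    exact_mod_cast this

lemma mul_diagonal_mul_star_apply_self (M : Matrix n n ℂ) (a : n → ℝ) (j : n) :
    (M * diagonal (fun k => (a k : ℂ)) * star M) j j =
      ((M.map Complex.normSq *ᵥ a) j : ℝ) := by
  rw [Matrix.mul_apply]
  simp only [mul_diagonal, star_apply, mulVec, dotProduct, map_apply]
  push_cast
  congr 1 with k
  rw [Complex.normSq_eq_conj_mul_self, RCLike.star_def]
  ring

lemma mul_diagonal_mul_star_eq_diagonal {M : Matrix n n ℂ} (hM : M ∈ unitaryGroup n ℂ)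
    {a b : n → ℝ} (h : ∀ j k, M j k ≠ 0 → a k = b j) :
    M * diagonal (fun k => (a k : ℂ)) * star M = diagonal (fun j => (b j : ℂ)) := by
  have hcomm : M * diagonal (fun k => (a k : ℂ)) = diagonal (fun j => (b j : ℂ)) * M := by
    ext j k
    rw [mul_diagonal, diagonal_mul]
    by_cases hjk : M j k = 0
    · simp [hjk]
    · rw [h j k hjk, mul_comm]
  rw [hcomm, Matrix.mul_assoc, mem_unitaryGroup_iff.mp hM, Matrix.mul_one]

end Unitary

section RelativeEntropy

variable {n : Type*} [Fintype n] [DecidableEq n]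

/-- Umegaki relative entropy `Tr ρ (log ρ - log σ)`, in nats. Because `Real.log 0 = 0` it is
finite, but meaningless, when the support of `ρ` is not contained in that of `σ`. -/
def relativeEntropy (ρ σ : Matrix n n ℂ) : ℝ :=
  (ρ * (cfc log ρ - cfc log σ)).trace.re

lemma relativeEntropy_eq_sub (ρ σ : Matrix n n ℂ) :
    relativeEntropy ρ σ = (ρ * cfc log ρ).trace.re - (ρ * cfc log σ).trace.re := by
  rw [relativeEntropy, Matrix.mul_sub, trace_sub, Complex.sub_re]

lemma star_mul_mul_eq_mul_diagonal_mul_star {ρ : Matrix n n ℂ} (hρ : ρ.IsHermitian)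
    (V : Matrix n n ℂ) :
    star V * ρ * V = (star V * hρ.eigenvectorUnitary) *
      diagonal (fun k => (hρ.eigenvalues k : ℂ)) * star (star V * hρ.eigenvectorUnitary) := by
  conv_lhs => rw [hρ.eq_eigenvectorUnitary_mul_diagonal_mul_star]
  simp only [star_mul, star_star, Matrix.mul_assoc]

lemma relativeEntropy_eq_sum_sub_sum {ρ σ : Matrix n n ℂ} (hρ : ρ.IsHermitian)
    (hσ : σ.IsHermitian) :
    relativeEntropy ρ σ = ∑ k, hρ.eigenvalues k * log (hρ.eigenvalues k) -
      ∑ j, ((star (hσ.eigenvectorUnitary : Matrix n n ℂ) * hρ.eigenvectorUnitary).map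
        Complex.normSq *ᵥ hρ.eigenvalues) j * log (hσ.eigenvalues j) := by
  rw [relativeEntropy_eq_sub, trace_mul_cfc hρ,
    trace_mul_cfc hσ, hρ.star_eigenvectorUnitary_mul_mul_eigenvectorUnitary,
    star_mul_mul_eq_mul_diagonal_mul_star hρ]
  simp only [mul_diagonal_mul_star_apply_self, diagonal_apply_eq]
  simp

lemma star_mul_mul_apply_self_eq_zero {ρ σ : Matrix n n ℂ} (hρ : ρ.PosSemidef) {c : ℝ}
    (hc : 0 < c) (hle : (σ - (c : ℂ) • ρ).PosSemidef) (V : Matrix n n ℂ) {j : n}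
    (hσj : (star V * σ * V) j j = 0) : (star V * ρ * V) j j = 0 := by
  have hρj : 0 ≤ (star V * ρ * V) j j := by
    simpa [star_eq_conjTranspose] using (hρ.conjTranspose_mul_mul_same V).diag_nonneg (i := j)
  have hdiff : 0 ≤ (star V * σ * V) j j - c * (star V * ρ * V) j j := by
    simpa [star_eq_conjTranspose, Matrix.mul_sub, Matrix.sub_mul] using
      (hle.conjTranspose_mul_mul_same V).diag_nonneg (i := j)
  rw [hσj, zero_sub] at hdiff
  rw [Complex.le_def] at hρj hdiff
  simp only [Complex.zero_re, Complex.zero_im, Complex.neg_re, Complex.neg_im, Complex.mul_re,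
    Complex.mul_im, Complex.ofReal_re, Complex.ofReal_im] at hρj hdiff
  apply Complex.ext
  · simp only [Complex.zero_re]
    nlinarith
  · simp only [Complex.zero_im]
    linarith [hρj.2]

end RelativeEntropy

section Klein

variable {n : Type*} [Fintype n] [DecidableEq n] {ρ σ : Matrix n n ℂ} {c : ℝ}

lemma relativeEntropy_nonneg_and_eigenvalues_eq (hρ : IsDensityMatrix ρ)
    (hσ : IsDensityMatrix σ) (hc : 0 < c) (hle : (σ - (c : ℂ) • ρ).PosSemidef) :
    0 ≤ relativeEntropy ρ σ ∧ (relativeEntropy ρ σ = 0 → ∀ j k,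
      (star (hσ.isHermitian.eigenvectorUnitary : Matrix n n ℂ) *
        hρ.isHermitian.eigenvectorUnitary) j k ≠ 0 →
      hρ.isHermitian.eigenvalues k = hσ.isHermitian.eigenvalues j) := by
  set V := (hσ.isHermitian.eigenvectorUnitary : Matrix n n ℂ)
  set M := star V * hρ.isHermitian.eigenvectorUnitary
  have hw : M.map Complex.normSq ∈ doublyStochastic ℝ n :=
    map_normSq_mem_doublyStochastic (mul_mem (Unitary.star_mem (Subtype.prop _)) (Subtype.prop _))
  have hsupp : ∀ j, hσ.isHermitian.eigenvalues j = 0 →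
      (M.map Complex.normSq *ᵥ hρ.isHermitian.eigenvalues) j = 0 := fun j hj => by
    have hσj : (star V * σ * V) j j = 0 := by
      simp [V, hσ.isHermitian.star_eigenvectorUnitary_mul_mul_eigenvectorUnitary, hj]
    have := star_mul_mul_apply_self_eq_zero hρ.1 hc hle V hσj
    rwa [star_mul_mul_eq_mul_diagonal_mul_star hρ.isHermitian, mul_diagonal_mul_star_apply_self,
      Complex.ofReal_eq_zero] at this
  obtain ⟨hklein, heq⟩ := sum_mulVec_mul_log_le hw hρ.1.eigenvalues_nonneg
    hσ.1.eigenvalues_nonneg (by rw [hρ.isHermitian.sum_eigenvalues_eq_one hρ.2,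
      hσ.isHermitian.sum_eigenvalues_eq_one hσ.2]) hsupp
  rw [relativeEntropy_eq_sum_sub_sum hρ.isHermitian hσ.isHermitian, sub_nonneg, sub_eq_zero,
    eq_comm]
  exact ⟨hklein, fun h j k hjk => heq h j k (by simpa using hjk)⟩

theorem relativeEntropy_nonneg (hρ : IsDensityMatrix ρ) (hσ : IsDensityMatrix σ)
    (hc : 0 < c) (hle : (σ - (c : ℂ) • ρ).PosSemidef) : 0 ≤ relativeEntropy ρ σ :=
  (relativeEntropy_nonneg_and_eigenvalues_eq hρ hσ hc hle).1

theorem eq_of_relativeEntropy_eq_zero (hρ : IsDensityMatrix ρ) (hσ : IsDensityMatrix σ)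
    (hc : 0 < c) (hle : (σ - (c : ℂ) • ρ).PosSemidef) (h : relativeEntropy ρ σ = 0) :
    ρ = σ := by
  set V := hσ.isHermitian.eigenvectorUnitary
  apply EquivLike.injective (Unitary.conjStarAlgAut ℂ (Matrix n n ℂ) (star V))
  rw [Unitary.conjStarAlgAut_star_apply, Unitary.conjStarAlgAut_star_apply,
    hσ.isHermitian.star_eigenvectorUnitary_mul_mul_eigenvectorUnitary,
    star_mul_mul_eq_mul_diagonal_mul_star hρ.isHermitian,
    mul_diagonal_mul_star_eq_diagonal (mul_mem (Unitary.star_mem V.2) (Subtype.prop _))]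
  exact (relativeEntropy_nonneg_and_eigenvalues_eq hρ hσ hc hle).2 h

end Klein

section Mixtures

variable {n ι : Type*} [Fintype ι] {ρ : ι → Matrix n n ℂ}

lemma isHermitian_sum_smul (q : ι → ℝ) (hρ : ∀ i, (ρ i).IsHermitian) :
    (∑ i, (q i : ℂ) • ρ i).IsHermitian := by
  simp only [IsHermitian, conjTranspose_sum, conjTranspose_smul, (hρ _).eq, Complex.star_def,
    Complex.conj_ofReal]

lemma sum_smul_sub_smul_posSemidef {q : ι → ℝ} (hq : ∀ i, 0 ≤ q i) (hρ : ∀ i, (ρ i).PosSemidef)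
    (i : ι) :
    (∑ j, (q j : ℂ) • ρ j - (q i : ℂ) • ρ i).PosSemidef := by
  classical
  rw [← Finset.sum_erase_eq_sub (Finset.mem_univ i)]
  exact posSemidef_sum _ fun j _ => (hρ j).smul (Complex.zero_le_real.mpr (hq j))

end Mixtures

section Concavity

variable {n ι : Type*} [Fintype n] [DecidableEq n] [Fintype ι] {q : ι → ℝ}
  {ρ : ι → Matrix n n ℂ}

lemma isDensityMatrix_sum_smul (hq : ∀ i, 0 ≤ q i) (hq1 : ∑ i, q i = 1)
    (hρ : ∀ i, IsDensityMatrix (ρ i)) : IsDensityMatrix (∑ i, (q i : ℂ) • ρ i) := by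
  refine ⟨posSemidef_sum _ fun i _ => (hρ i).1.smul (Complex.zero_le_real.mpr (hq i)), ?_⟩
  simp only [trace_sum, trace_smul, (hρ _).2, smul_eq_mul, mul_one]
  exact_mod_cast hq1

lemma vonNeumannEntropy_sum_smul_sub_sum_mul (q : ι → ℝ) (hρ : ∀ i, (ρ i).IsHermitian) :
    (vonNeumannEntropy (∑ i, (q i : ℂ) • ρ i) - ∑ i, q i * vonNeumannEntropy (ρ i)) * log 2 =
      ∑ i, q i * relativeEntropy (ρ i) (∑ i, (q i : ℂ) • ρ i) := by
  have hmix : (∑ i, (q i : ℂ) • ρ i) * cfc log (∑ i, (q i : ℂ) • ρ i) =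
      ∑ i, (q i : ℂ) • (ρ i * cfc log (∑ i, (q i : ℂ) • ρ i)) := by
    simp only [Matrix.sum_mul, Matrix.smul_mul]
  simp only [sub_mul, Finset.sum_mul, mul_assoc, vonNeumannEntropy_mul_log_two (hρ _),
    vonNeumannEntropy_mul_log_two (isHermitian_sum_smul q hρ), relativeEntropy_eq_sub, hmix,
    trace_sum, trace_smul, Complex.re_sum, smul_eq_mul, Complex.re_ofReal_mul]
  rw [← Finset.sum_neg_distrib, ← Finset.sum_sub_distrib]
  congr 1 with i
  ring

lemma mul_relativeEntropy_sum_smul_nonneg (hq : ∀ i, 0 ≤ q i) (hq1 : ∑ i, q i = 1)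
    (hρ : ∀ i, IsDensityMatrix (ρ i)) (i : ι) :
    0 ≤ q i * relativeEntropy (ρ i) (∑ i, (q i : ℂ) • ρ i) := by
  rcases (hq i).eq_or_lt with hqi | hqi
  · simp [← hqi]
  exact mul_nonneg hqi.le (relativeEntropy_nonneg (hρ i) (isDensityMatrix_sum_smul hq hq1 hρ) hqi
    (sum_smul_sub_smul_posSemidef hq (fun j => (hρ j).1) i))

theorem sum_mul_vonNeumannEntropy_le (hq : ∀ i, 0 ≤ q i) (hq1 : ∑ i, q i = 1)
    (hρ : ∀ i, IsDensityMatrix (ρ i)) :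
    ∑ i, q i * vonNeumannEntropy (ρ i) ≤ vonNeumannEntropy (∑ i, (q i : ℂ) • ρ i) := by
  have h := vonNeumannEntropy_sum_smul_sub_sum_mul q fun i => (hρ i).isHermitian
  have hnonneg := Finset.sum_nonneg fun i (_ : i ∈ Finset.univ) =>
    mul_relativeEntropy_sum_smul_nonneg hq hq1 hρ i
  rw [← h] at hnonneg
  linarith [nonneg_of_mul_nonneg_left hnonneg (log_pos one_lt_two)]

theorem eq_sum_smul_of_sum_mul_vonNeumannEntropy_eq (hq : ∀ i, 0 ≤ q i) (hq1 : ∑ i, q i = 1)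
    (hρ : ∀ i, IsDensityMatrix (ρ i))
    (heq : ∑ i, q i * vonNeumannEntropy (ρ i) = vonNeumannEntropy (∑ i, (q i : ℂ) • ρ i))
    {i : ι} (hi : 0 < q i) : ρ i = ∑ i, (q i : ℂ) • ρ i := by
  have h := vonNeumannEntropy_sum_smul_sub_sum_mul q fun i => (hρ i).isHermitian
  rw [heq, sub_self, zero_mul, eq_comm, Finset.sum_eq_zero_iff_of_nonneg fun i _ =>
    mul_relativeEntropy_sum_smul_nonneg hq hq1 hρ i] at h
  exact eq_of_relativeEntropy_eq_zero (hρ i) (isDensityMatrix_sum_smul hq hq1 hρ) hi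
    (sum_smul_sub_smul_posSemidef hq (fun j => (hρ j).1) i)
    ((mul_eq_zero.mp (h i (Finset.mem_univ i))).resolve_left hi.ne')

end Concavity

section WeightedConcavity

variable {n ι : Type*} [Fintype n] [DecidableEq n] [Fintype ι] {p : ι → ℝ}
  {ρ : ι → Matrix n n ℂ}

lemma vonNeumannEntropy_sum_smul_of_pos (hp : ∀ i, 0 ≤ p i) (ht : 0 < ∑ i, p i)
    (hρ : ∀ i, IsDensityMatrix (ρ i)) :
    vonNeumannEntropy (∑ i, (p i : ℂ) • ρ i) =
      (∑ i, p i) * vonNeumannEntropy (∑ i, ((p i / ∑ j, p j : ℝ) : ℂ) • ρ i) -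
        (∑ i, p i) * logb 2 (∑ i, p i) := by
  have hsum : ∑ i, (p i : ℂ) • ρ i =
      ((∑ i, p i : ℝ) : ℂ) • ∑ i, ((p i / ∑ j, p j : ℝ) : ℂ) • ρ i := by
    rw [Finset.smul_sum]
    congr 1 with i
    rw [smul_smul, ← Complex.ofReal_mul, mul_div_cancel₀ _ ht.ne']
  have hmix := isDensityMatrix_sum_smul (fun i => div_nonneg (hp i) ht.le)
    (by rw [← Finset.sum_div, div_self ht.ne']) hρ
  rw [hsum, vonNeumannEntropy_real_smul hmix.isHermitian hmix.2]

theorem sum_mul_vonNeumannEntropy_le_add (hp : ∀ i, 0 ≤ p i) (hρ : ∀ i, IsDensityMatrix (ρ i)) :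
    ∑ i, p i * vonNeumannEntropy (ρ i) ≤
      vonNeumannEntropy (∑ i, (p i : ℂ) • ρ i) + (∑ i, p i) * logb 2 (∑ i, p i) := by
  rcases (Fintype.sum_nonneg (f := p) hp).eq_or_lt with ht | ht
  · have hp0 := (Fintype.sum_eq_zero_iff_of_nonneg (f := p) hp).mp ht.symm
    simp [hp0, vonNeumannEntropy_zero]
  have hconc := sum_mul_vonNeumannEntropy_le (fun i => div_nonneg (hp i) ht.le)
    (by rw [← Finset.sum_div, div_self ht.ne']) hρ
  have hscale : ∑ i, p i * vonNeumannEntropy (ρ i) =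
      (∑ i, p i) * ∑ i, p i / (∑ j, p j) * vonNeumannEntropy (ρ i) := by
    rw [Finset.mul_sum]
    congr 1 with i
    field_simp
  rw [vonNeumannEntropy_sum_smul_of_pos hp ht hρ, hscale]
  nlinarith

theorem vonNeumannEntropy_sum_smul_add_eq_iff [Nonempty ι] (hp : ∀ i, 0 ≤ p i)
    (hρ : ∀ i, IsDensityMatrix (ρ i)) :
    vonNeumannEntropy (∑ i, (p i : ℂ) • ρ i) + (∑ i, p i) * logb 2 (∑ i, p i) =
        ∑ i, p i * vonNeumannEntropy (ρ i) ↔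
      ∃ σ, IsDensityMatrix σ ∧ ∀ i, 0 < p i → ρ i = σ := by
  constructor
  · intro heq
    rcases (Fintype.sum_nonneg (f := p) hp).eq_or_lt with ht | ht
    · have hp0 := (Fintype.sum_eq_zero_iff_of_nonneg (f := p) hp).mp ht.symm
      exact ⟨ρ (Classical.arbitrary ι), hρ _, fun i hi => absurd (congrFun hp0 i) hi.ne'⟩
    have hq : ∀ i, 0 ≤ p i / ∑ j, p j := fun i => div_nonneg (hp i) ht.le
    have hq1 : ∑ i, p i / ∑ j, p j = 1 := by rw [← Finset.sum_div, div_self ht.ne']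
    refine ⟨_, isDensityMatrix_sum_smul hq hq1 hρ, fun i hi =>
      eq_sum_smul_of_sum_mul_vonNeumannEntropy_eq hq hq1 hρ ?_ (div_pos hi ht)⟩
    rw [vonNeumannEntropy_sum_smul_of_pos hp ht hρ, sub_add_cancel] at heq
    apply mul_left_cancel₀ ht.ne'
    rw [heq, Finset.mul_sum]
    congr 1 with i
    field_simp
  · rintro ⟨σ, hσ, hρσ⟩
    have hterm : ∀ i, (p i : ℂ) • ρ i = (p i : ℂ) • σ ∧
        p i * vonNeumannEntropy (ρ i) = p i * vonNeumannEntropy σ := fun i => by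
      rcases (hp i).eq_or_lt with hi | hi
      · simp [← hi]
      · rw [hρσ i hi]; exact ⟨rfl, rfl⟩
    simp only [fun i => (hterm i).1, fun i => (hterm i).2, ← Finset.sum_smul, ← Finset.sum_mul,
      ← Complex.ofReal_sum, vonNeumannEntropy_real_smul hσ.isHermitian hσ.2]
    ring

end WeightedConcavity

section ClassicalQuantumStates

variable {𝒳 𝒴 n : Type*} [Fintype 𝒳] [Fintype 𝒴] [DecidableEq 𝒴] [Fintype n]
  [DecidableEq n] {P : 𝒳 × 𝒴 → ℝ} {ρ : 𝒳 × 𝒴 → Matrix n n ℂ}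

lemma vonNeumannEntropy_blockDiagonal_smul [DecidableEq 𝒳] (hρ : ∀ p, IsDensityMatrix (ρ p)) :
    vonNeumannEntropy (blockDiagonal fun p => (P p : ℂ) • ρ p) =
      ∑ p, P p * vonNeumannEntropy (ρ p) + shannonEntropy P := by
  rw [vonNeumannEntropy_blockDiagonal _ fun p => (hρ p).isHermitian.smul (Complex.conj_ofReal _)]
  simp only [vonNeumannEntropy_real_smul (hρ _).isHermitian (hρ _).2, Finset.sum_sub_distrib,
    shannonEntropy]
  ring

lemma vonNeumannEntropy_blockDiagonal_sum_smul (hρ : ∀ p, IsDensityMatrix (ρ p)) :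
    vonNeumannEntropy (blockDiagonal fun y => ∑ x, (P (x, y) : ℂ) • ρ (x, y)) =
      ∑ y, vonNeumannEntropy (∑ x, (P (x, y) : ℂ) • ρ (x, y)) :=
  vonNeumannEntropy_blockDiagonal _ fun y => isHermitian_sum_smul _ fun x => (hρ (x, y)).isHermitian

theorem exists_conditional_state_iff_vonNeumannEntropy_sub_eq [DecidableEq 𝒳] [Nonempty 𝒳] (hP0 : ∀ p, 0 ≤ P p)
    (hρ : ∀ p, IsDensityMatrix (ρ p)) :
    (∃ σ : 𝒴 → Matrix n n ℂ, (∀ y, IsDensityMatrix (σ y)) ∧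
        ∀ x y, 0 < P (x, y) → ρ (x, y) = σ y) ↔
      vonNeumannEntropy (blockDiagonal fun p => (P p : ℂ) • ρ p) -
          vonNeumannEntropy (blockDiagonal fun y => ∑ x, (P (x, y) : ℂ) • ρ (x, y)) =
        shannonEntropy P - shannonEntropy (fun y => ∑ x, P (x, y)) := by
  set gap : 𝒴 → ℝ := fun y => vonNeumannEntropy (∑ x, (P (x, y) : ℂ) • ρ (x, y)) +
    (∑ x, P (x, y)) * logb 2 (∑ x, P (x, y)) - ∑ x, P (x, y) * vonNeumannEntropy (ρ (x, y))
  have hgap : ∀ y, 0 ≤ gap y := fun y => sub_nonneg.mpr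
    (sum_mul_vonNeumannEntropy_le_add (fun x => hP0 (x, y)) fun x => hρ (x, y))
  have hdiff : vonNeumannEntropy (blockDiagonal fun p => (P p : ℂ) • ρ p) -
      vonNeumannEntropy (blockDiagonal fun y => ∑ x, (P (x, y) : ℂ) • ρ (x, y)) -
      (shannonEntropy P - shannonEntropy (fun y => ∑ x, P (x, y))) = -∑ y, gap y := by
    rw [vonNeumannEntropy_blockDiagonal_smul hρ, vonNeumannEntropy_blockDiagonal_sum_smul hρ]
    simp only [gap, shannonEntropy, Fintype.sum_prod_type_right, Finset.sum_sub_distrib,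
      Finset.sum_add_distrib]
    ring
  calc _ ↔ ∀ y, ∃ σ, IsDensityMatrix σ ∧ ∀ x, 0 < P (x, y) → ρ (x, y) = σ := by
        simp only [Classical.skolem, forall_and]
        exact exists_congr fun σ => and_congr_right fun _ => forall_comm
    _ ↔ ∀ y, gap y = 0 := forall_congr' fun y => by
        rw [sub_eq_zero]
        exact (vonNeumannEntropy_sum_smul_add_eq_iff (fun x => hP0 (x, y)) fun x => hρ (x, y)).symm
    _ ↔ ∑ y, gap y = 0 := by
        rw [Fintype.sum_eq_zero_iff_of_nonneg (f := gap) hgap, funext_iff]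
        rfl
    _ ↔ _ := by constructor <;> intro h <;> linarith

end ClassicalQuantumStates

/-- for a ccq-state `ρ_{XYR} = Σ_{x,y} P(x,y) |x⟩⟨x| ⊗ |y⟩⟨y| ⊗ ρ^{x,y}`
the Markov-chain condition `X ↔ Y ↔ R` is equivalent to each of the entropic
conditions `S(X|YR) = H(X|Y)`, `S(R|YX) = S(R|Y)` and `S(X;YR) = I(X;Y)`. -/
theorem markov_chain_tfae
    {𝒳 𝒴 : Type*} [Fintype 𝒳] [Fintype 𝒴] [DecidableEq 𝒳] [DecidableEq 𝒴] {d : ℕ}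
    (P : 𝒳 × 𝒴 → ℝ) (hP0 : ∀ p, 0 ≤ P p) (hP1 : ∑ p, P p = 1)
    (ρ : 𝒳 × 𝒴 → Matrix (Fin d) (Fin d) ℂ)
    (hρ : ∀ p, 0 < P p → IsDensityMatrix (ρ p)) :
    List.TFAE
      [ -- (1) Markov chain X ↔ Y ↔ R : the quantum register depends only on y
        (∃ σ : 𝒴 → Matrix (Fin d) (Fin d) ℂ, (∀ y, IsDensityMatrix (σ y)) ∧
          ∀ x y, 0 < P (x, y) → ρ (x, y) = σ y),
        -- (2) S(X|YR) = H(X|Y), i.e. S(ρ_{XYR}) − S(ρ_{YR}) = H(X,Y) − H(Y)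
        vonNeumannEntropy (Matrix.blockDiagonal fun p : 𝒳 × 𝒴 => (P p : ℂ) • ρ p) -
            vonNeumannEntropy
              (Matrix.blockDiagonal fun y : 𝒴 => ∑ x, (P (x, y) : ℂ) • ρ (x, y)) =
          shannonEntropy P - shannonEntropy (fun y => ∑ x, P (x, y)),
        -- (3) S(R|YX) = S(R|Y), i.e. S(ρ_{XYR}) − H(X,Y) = S(ρ_{YR}) − H(Y)
        vonNeumannEntropy (Matrix.blockDiagonal fun p : 𝒳 × 𝒴 => (P p : ℂ) • ρ p) -
            shannonEntropy P =
          vonNeumannEntropy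
              (Matrix.blockDiagonal fun y : 𝒴 => ∑ x, (P (x, y) : ℂ) • ρ (x, y)) -
            shannonEntropy (fun y => ∑ x, P (x, y)),
        -- (4) S(X;YR) = I(X;Y)
        shannonEntropy (fun x => ∑ y, P (x, y)) +
            vonNeumannEntropy
              (Matrix.blockDiagonal fun y : 𝒴 => ∑ x, (P (x, y) : ℂ) • ρ (x, y)) -
            vonNeumannEntropy (Matrix.blockDiagonal fun p : 𝒳 × 𝒴 => (P p : ℂ) • ρ p) =
          shannonEntropy (fun x => ∑ y, P (x, y)) +
            shannonEntropy (fun y => ∑ x, P (x, y)) - shannonEntropy P ] := by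
  obtain ⟨p₀, hp₀⟩ : ∃ p, 0 < P p := by
    by_contra! h
    simp [fun p => le_antisymm (h p) (hP0 p)] at hP1
  have : Nonempty 𝒳 := ⟨p₀.1⟩
  set ρ' := fun p => if 0 < P p then ρ p else ρ p₀
  have hρ' : ∀ p, IsDensityMatrix (ρ' p) := fun p => by
    by_cases hp : 0 < P p <;> simp [ρ', hp, hρ, hp₀]
  have hsmul : ∀ p, (P p : ℂ) • ρ p = (P p : ℂ) • ρ' p := fun p => by
    by_cases hp : 0 < P p
    · simp [ρ', hp]
    · simp [le_antisymm (not_lt.mp hp) (hP0 p)]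
  have hsupp : ∀ x y, 0 < P (x, y) → ρ (x, y) = ρ' (x, y) := fun x y hxy => by simp [ρ', hxy]
  simp only [hsmul]
  tfae_have 1 ↔ 2 := by
    simp +contextual only [hsupp]
    exact exists_conditional_state_iff_vonNeumannEntropy_sub_eq hP0 hρ'
  tfae_have 2 ↔ 3 := by constructor <;> intro h <;> linarith
  tfae_have 2 ↔ 4 := by constructor <;> intro h <;> linarith
  tfae_finish

end
end

section
/- Let P be a non-trivial probability mass function on a finite set 𝒳×𝒴, i.e. H(X↘Y | Y) > 0 for (X,Y) ~ P. Let ψ₀ := Σ_{x,y} √(P(x,y)) |x⟩⊗|y⟩ ∈ ℂ^𝒳 ⊗ ℂ^𝒴 be the canonical embedding of P, with reduced density matrices ρ_A := tr_B|ψ₀⟩⟨ψ₀| and ρ_B := tr_A|ψ₀⟩⟨ψ₀|. Then S(X↘Y | B) > 0 and S(Y↘X | A) > 0; that is, the canonical embedding of a non-trivial primitive is a non-trivial embedding. -/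
open scoped BigOperators
open Matrix
open scoped ComplexOrder

attribute [local instance 10] Classical.propDecidable

noncomputable section

/-- Rank-one outer product `|φ⟩⟨φ|`. -/
def outer {n : Type*} (φ : n → ℂ) : Matrix n n ℂ :=
  fun i j => φ i * (starRingEnd ℂ) (φ j)

variable {𝒳 𝒴 : Type*} [Fintype 𝒳] [Fintype 𝒴] [DecidableEq 𝒳] [DecidableEq 𝒴]

/-- Marginal of `X`. -/
def margX (P : 𝒳 × 𝒴 → ℝ) (x : 𝒳) : ℝ := ∑ y, P (x, y)

/-- Marginal of `Y`. -/
def margY (P : 𝒳 × 𝒴 → ℝ) (y : 𝒴) : ℝ := ∑ x, P (x, y)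

/-- `f_X(x) = P_{Y|X=x}`, the conditional distribution of `Y` given `X = x`. -/
def condYX (P : 𝒳 × 𝒴 → ℝ) (x : 𝒳) : 𝒴 → ℝ := fun y => P (x, y) / margX P x

/-- `f_Y(y) = P_{X|Y=y}`, the conditional distribution of `X` given `Y = y`. -/
def condXY (P : 𝒳 × 𝒴 → ℝ) (y : 𝒴) : 𝒳 → ℝ := fun x => P (x, y) / margY P y

/-- `H(X↘Y | Y)`: the classical base-2 conditional Shannon entropy of the dependent
part `X↘Y = f_X(X)` given `Y`, written by grouping the values of `X` into the fibres
of `f_X = condYX P`. -/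
def depCondEntropyX (P : 𝒳 × 𝒴 → ℝ) : ℝ :=
  -∑ p : 𝒳 × 𝒴, P p *
    Real.logb 2
      ((∑ x' ∈ Finset.univ.filter fun x' => condYX P x' = condYX P p.1, P (x', p.2)) /
        margY P p.2)

/-- `H(Y↘X | X)`, symmetrically. -/
def depCondEntropyY (P : 𝒳 × 𝒴 → ℝ) : ℝ :=
  -∑ p : 𝒳 × 𝒴, P p *
    Real.logb 2
      ((∑ y' ∈ Finset.univ.filter fun y' => condXY P y' = condXY P p.2, P (p.1, y')) /
        margX P p.1)

/-- Alice's vector `φ_x = Σ_y √(P_{Y|X=x}(y)) |y⟩`. -/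
def phiX (P : 𝒳 × 𝒴 → ℝ) (x : 𝒳) : 𝒴 → ℂ := fun y => (Real.sqrt (condYX P x y) : ℂ)

/-- Bob's vector `φ_y = Σ_x √(P_{X|Y=y}(x)) |x⟩`. -/
def phiY (P : 𝒳 × 𝒴 → ℝ) (y : 𝒴) : 𝒳 → ℂ := fun x => (Real.sqrt (condXY P y x) : ℂ)

/-- Bob's reduced density matrix of the canonical embedding:
`ρ_B = Σ_x P_X(x) |φ_x⟩⟨φ_x|`. -/
def rhoB (P : 𝒳 × 𝒴 → ℝ) : Matrix 𝒴 𝒴 ℂ :=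
  ∑ x, (margX P x : ℂ) • outer (phiX P x)

/-- Alice's reduced density matrix `ρ_A = Σ_y P_Y(y) |φ_y⟩⟨φ_y|`. -/
def rhoA (P : 𝒳 × 𝒴 → ℝ) : Matrix 𝒳 𝒳 ℂ :=
  ∑ y, (margY P y : ℂ) • outer (phiY P y)

/-- The cq-state `ρ_{X̃B} = Σ_{x̃} |x̃⟩⟨x̃| ⊗ (Σ_{x : f_X(x)=x̃} P_X(x)|φ_x⟩⟨φ_x|)`,
represented as a block-diagonal matrix with blocks indexed by the (finitely many)
values `x̃` of the dependent part `f_X = condYX P`. -/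
def rhoXtB (P : 𝒳 × 𝒴 → ℝ) :
    Matrix (𝒴 × {v // v ∈ Finset.univ.image (condYX P)})
      (𝒴 × {v // v ∈ Finset.univ.image (condYX P)}) ℂ :=
  Matrix.blockDiagonal fun v : {v // v ∈ Finset.univ.image (condYX P)} =>
    ∑ x ∈ Finset.univ.filter fun x => condYX P x = v.1, (margX P x : ℂ) • outer (phiX P x)

/-- The cq-state `ρ_{ỸA}` with blocks indexed by the values of `f_Y = condXY P`. -/
def rhoYtA (P : 𝒳 × 𝒴 → ℝ) :
    Matrix (𝒳 × {v // v ∈ Finset.univ.image (condXY P)})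
      (𝒳 × {v // v ∈ Finset.univ.image (condXY P)}) ℂ :=
  Matrix.blockDiagonal fun v : {v // v ∈ Finset.univ.image (condXY P)} =>
    ∑ y ∈ Finset.univ.filter fun y => condXY P y = v.1, (margY P y : ℂ) • outer (phiY P y)

/-! Write `v` for the values of the dependent part `f_X`, `q_v = P(X↘Y = v)`, and let `C` be
the matrix with columns `c_v = √q_v • φ_v`. Then `ρ_B = ∑ v, |c_v⟩⟨c_v| = C Cᴴ` has the nonzero
spectrum of the Gram matrix `Cᴴ C`, while `ρ_{X̃B} = ⊕ v, |c_v⟩⟨c_v|` has that of `diag q`, the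
diagonal of `Cᴴ C`. For a positive semidefinite `M = U diag(λ) Uᴴ` the diagonal is `d = B λ` with
`B = (|U i j|²)` doubly stochastic, so concavity of `-t log t` gives `S(M) ≤ H(d)`, and equality
in row `i` forces row `i` of `M` to vanish off the diagonal. Non-triviality yields `x, x'` with
`f_X(x) ≠ f_X(x')` and a common `y` in their supports, so `c_{f_X(x)}` and `c_{f_X(x')}` overlap
and the inequality is strict.

The claim for `A` is the same claim for the swapped pmf. Non-triviality passes to it: if no two
`y, y'` with distinct `f_Y` share an `x`, then every row `P(x, ·)` with `P(x, y₀) > 0` is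
proportional to `P_Y` on the `f_Y`-class of `y₀`, so all such `x` have the same `f_X`. -/

lemma shannonEntropy_eq_sum_negMulLog {α : Type*} [Fintype α] (p : α → ℝ) :
    shannonEntropy p = (∑ x, Real.negMulLog (p x)) / Real.log 2 := by
  simp only [shannonEntropy, Real.negMulLog, Real.logb, Finset.sum_div, ← Finset.sum_neg_distrib]
  exact Finset.sum_congr rfl fun x _ => by ring

lemma shannonEntropy_lt_of_sum_negMulLog_lt {α β : Type*} [Fintype α] [Fintype β] {p : α → ℝ}
    {q : β → ℝ} (h : ∑ x, Real.negMulLog (p x) < ∑ y, Real.negMulLog (q y)) :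
    shannonEntropy p < shannonEntropy q := by
  rw [shannonEntropy_eq_sum_negMulLog, shannonEntropy_eq_sum_negMulLog]
  exact div_lt_div_of_pos_right h (Real.log_pos one_lt_two)

open Polynomial

section VonNeumann

variable {m n : Type*} [Fintype m] [Fintype n] [DecidableEq m] [DecidableEq n]

lemma vonNeumannEntropy_eq_sum_roots {A : Matrix n n ℂ} (hA : A.IsHermitian) :
    vonNeumannEntropy A =
      (A.charpoly.roots.map fun z : ℂ => Real.negMulLog z.re).sum / Real.log 2 := by
  rw [vonNeumannEntropy, dif_pos hA, shannonEntropy_eq_sum_negMulLog,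
    hA.roots_charpoly_eq_eigenvalues, Multiset.map_map]
  simp

lemma sum_negMulLog_roots_X_pow_mul {p : ℂ[X]} (hp : p ≠ 0) (k : ℕ) :
    ((X ^ k * p).roots.map fun z : ℂ => Real.negMulLog z.re).sum =
      (p.roots.map fun z : ℂ => Real.negMulLog z.re).sum := by
  rw [roots_mul (mul_ne_zero (pow_ne_zero _ X_ne_zero) hp), roots_X_pow,
    Multiset.nsmul_singleton]
  simp

/-- Only the nonzero eigenvalues contribute, and `A Aᴴ`, `Aᴴ A` share them. -/
lemma vonNeumannEntropy_mul_conjTranspose_comm (A : Matrix m n ℂ) :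
    vonNeumannEntropy (A * Aᴴ) = vonNeumannEntropy (Aᴴ * A) := by
  rw [vonNeumannEntropy_eq_sum_roots A.isHermitian_mul_conjTranspose_self,
    vonNeumannEntropy_eq_sum_roots A.isHermitian_conjTranspose_mul_self,
    ← sum_negMulLog_roots_X_pow_mul (A * Aᴴ).charpoly_monic.ne_zero (Fintype.card n),
    ← sum_negMulLog_roots_X_pow_mul (Aᴴ * A).charpoly_monic.ne_zero (Fintype.card m),
    Matrix.charpoly_mul_comm']

lemma vonNeumannEntropy_diagonal (d : n → ℝ) :
    vonNeumannEntropy (Matrix.diagonal fun i => (d i : ℂ)) = shannonEntropy d := by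
  have hd : (Matrix.diagonal fun i => (d i : ℂ)).IsHermitian :=
    Matrix.isHermitian_diagonal_of_self_adjoint _ (funext fun i => Complex.conj_ofReal _)
  rw [vonNeumannEntropy_eq_sum_roots hd, Matrix.charpoly_diagonal,
    roots_prod _ _ (Finset.prod_ne_zero_iff.2 fun i _ => X_sub_C_ne_zero _),
    shannonEntropy_eq_sum_negMulLog]
  simp

end VonNeumann

section Unitary

variable {n : Type*} [Fintype n] [DecidableEq n] {U : Matrix n n ℂ}

lemma sum_normSq_row_eq_one (hU : U ∈ Matrix.unitaryGroup n ℂ) (i : n) :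
    ∑ j, Complex.normSq (U i j) = 1 := by
  have h := congrFun (congrFun (Matrix.mem_unitaryGroup_iff.mp hU) i) i
  simp only [Matrix.mul_apply, Matrix.one_apply_eq, Matrix.star_apply, RCLike.star_def,
    Complex.mul_conj] at h
  exact_mod_cast h

lemma sum_normSq_col_eq_one (hU : U ∈ Matrix.unitaryGroup n ℂ) (j : n) :
    ∑ i, Complex.normSq (U i j) = 1 := by
  have h := congrFun (congrFun (Matrix.mem_unitaryGroup_iff'.mp hU) j) j
  simp only [Matrix.mul_apply, Matrix.one_apply_eq, Matrix.star_apply, RCLike.star_def,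
    ← Complex.normSq_eq_conj_mul_self] at h
  exact_mod_cast h

variable {M : Matrix n n ℂ} {μ : n → ℝ}

lemma apply_eq_sum_of_eq_conj (hM : M = U * Matrix.diagonal (fun j => (μ j : ℂ)) * star U)
    (i k : n) : M i k = ∑ j, U i j * μ j * star (U k j) := by
  rw [hM, Matrix.mul_apply]
  simp only [Matrix.mul_diagonal, Matrix.star_apply]

lemma re_apply_self_of_eq_conj (hM : M = U * Matrix.diagonal (fun j => (μ j : ℂ)) * star U)
    (i : n) : (M i i).re = ∑ j, Complex.normSq (U i j) * μ j := by
  rw [apply_eq_sum_of_eq_conj hM, Complex.re_sum]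
  refine Finset.sum_congr rfl fun j _ => ?_
  rw [mul_right_comm, RCLike.star_def, Complex.mul_conj, ← Complex.ofReal_mul, Complex.ofReal_re,
    mul_comm]

lemma apply_eq_zero_of_eq_conj (hU : U ∈ Matrix.unitaryGroup n ℂ)
    (hM : M = U * Matrix.diagonal (fun j => (μ j : ℂ)) * star U) {i k : n} (hik : i ≠ k) {c : ℝ}
    (h : ∀ j, U i j ≠ 0 → μ j = c) : M i k = 0 := by
  calc M i k = c * (U * star U) i k := by
        rw [apply_eq_sum_of_eq_conj hM, Matrix.mul_apply, Finset.mul_sum]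
        refine Finset.sum_congr rfl fun j _ => ?_
        by_cases hj : U i j = 0
        · simp [hj]
        · rw [h j hj, Matrix.star_apply]; ring
    _ = 0 := by rw [Matrix.mem_unitaryGroup_iff.mp hU, Matrix.one_apply_ne hik, mul_zero]

lemma sum_normSq_mul_negMulLog_le (hU : U ∈ Matrix.unitaryGroup n ℂ)
    (hM : M = U * Matrix.diagonal (fun j => (μ j : ℂ)) * star U) (hμ : ∀ j, 0 ≤ μ j) (i : n) :
    ∑ j, Complex.normSq (U i j) * Real.negMulLog (μ j) ≤ Real.negMulLog (M i i).re := by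
  rw [re_apply_self_of_eq_conj hM]
  exact Real.concaveOn_negMulLog.le_map_sum (fun j _ => Complex.normSq_nonneg _)
    (sum_normSq_row_eq_one hU i) fun j _ => hμ j

/-- Jensen is strict in row `i` because the equality case would force `M i k = 0`. -/
lemma sum_normSq_mul_negMulLog_lt (hU : U ∈ Matrix.unitaryGroup n ℂ)
    (hM : M = U * Matrix.diagonal (fun j => (μ j : ℂ)) * star U) (hμ : ∀ j, 0 ≤ μ j) {i k : n}
    (hik : i ≠ k) (h : M i k ≠ 0) :
    ∑ j, Complex.normSq (U i j) * Real.negMulLog (μ j) < Real.negMulLog (M i i).re := by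
  refine (sum_normSq_mul_negMulLog_le hU hM hμ i).lt_of_ne fun heq => h ?_
  have hconst := (Real.strictConcaveOn_negMulLog.map_sum_eq_iff_of_nonneg
    (fun j _ => Complex.normSq_nonneg (U i j)) (sum_normSq_row_eq_one hU i)
    fun j _ => hμ j).1 (by simpa only [smul_eq_mul, ← re_apply_self_of_eq_conj hM] using heq.symm)
  obtain ⟨j₀, -, hj₀⟩ := Finset.exists_ne_zero_of_sum_ne_zero
    ((sum_normSq_row_eq_one hU i).symm ▸ one_ne_zero)
  exact apply_eq_zero_of_eq_conj hU hM hik fun j hj =>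
    hconst (Finset.mem_univ j) (Complex.normSq_pos.2 hj).ne' (Finset.mem_univ j₀) hj₀

lemma sum_negMulLog_lt_of_eq_conj (hU : U ∈ Matrix.unitaryGroup n ℂ)
    (hM : M = U * Matrix.diagonal (fun j => (μ j : ℂ)) * star U) (hμ : ∀ j, 0 ≤ μ j) {i k : n}
    (hik : i ≠ k) (h : M i k ≠ 0) :
    ∑ j, Real.negMulLog (μ j) < ∑ i, Real.negMulLog (M i i).re :=
  calc ∑ j, Real.negMulLog (μ j)
      = ∑ j, ∑ i, Complex.normSq (U i j) * Real.negMulLog (μ j) := by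
        simp only [← Finset.sum_mul, sum_normSq_col_eq_one hU, one_mul]
    _ = ∑ i, ∑ j, Complex.normSq (U i j) * Real.negMulLog (μ j) := Finset.sum_comm
    _ < ∑ i, Real.negMulLog (M i i).re :=
        Finset.sum_lt_sum (fun i _ => sum_normSq_mul_negMulLog_le hU hM hμ i)
          ⟨i, Finset.mem_univ i, sum_normSq_mul_negMulLog_lt hU hM hμ hik h⟩

theorem Matrix.PosSemidef.vonNeumannEntropy_lt_shannonEntropy_diag (hM : M.PosSemidef)
    {i k : n} (hik : i ≠ k) (h : M i k ≠ 0) :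
    vonNeumannEntropy M < shannonEntropy fun i => (M i i).re := by
  have hconj : M = hM.1.eigenvectorUnitary *
      Matrix.diagonal (fun j => (hM.1.eigenvalues j : ℂ)) * star hM.1.eigenvectorUnitary.1 := by
    conv_lhs => rw [hM.1.spectral_theorem, Unitary.conjStarAlgAut_apply]
    rfl
  rw [vonNeumannEntropy, dif_pos hM.1]
  exact shannonEntropy_lt_of_sum_negMulLog_lt (sum_negMulLog_lt_of_eq_conj
    hM.1.eigenvectorUnitary.2 hconj hM.eigenvalues_nonneg hik h)

end Unitary

section ColumnBlocks

variable {m k : Type*} [Fintype k]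

lemma mul_conjTranspose_eq_sum_outer (C : Matrix m k ℂ) :
    C * Cᴴ = ∑ v, outer fun y => C y v := by
  ext y y'
  simp [Matrix.mul_apply, Matrix.sum_apply, outer]

variable [DecidableEq k]

def columnBlocks (C : Matrix m k ℂ) : Matrix (m × k) k ℂ :=
  fun p v => if p.2 = v then C p.1 v else 0

lemma columnBlocks_mul_conjTranspose (C : Matrix m k ℂ) :
    columnBlocks C * (columnBlocks C)ᴴ = Matrix.blockDiagonal fun v => outer fun y => C y v := by
  ext ⟨y, a⟩ ⟨y', b⟩
  by_cases hab : a = b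
  · subst hab
    simp [columnBlocks, Matrix.mul_apply, outer]
  · simp [columnBlocks, Matrix.mul_apply, Matrix.blockDiagonal_apply_ne _ _ _ hab, Ne.symm hab]

variable [Fintype m]

lemma conjTranspose_columnBlocks_mul (C : Matrix m k ℂ) :
    (columnBlocks C)ᴴ * columnBlocks C = Matrix.diagonal fun v => (Cᴴ * C) v v := by
  ext v w
  by_cases hvw : v = w
  · subst hvw
    simp [columnBlocks, Matrix.mul_apply, Fintype.sum_prod_type]
  · simp [columnBlocks, Matrix.mul_apply, Fintype.sum_prod_type, hvw, Ne.symm hvw]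

variable [DecidableEq m]

theorem vonNeumannEntropy_mul_conjTranspose_lt_blockDiagonal (C : Matrix m k ℂ) {v w : k}
    (hvw : v ≠ w) (h : (Cᴴ * C) v w ≠ 0) :
    vonNeumannEntropy (C * Cᴴ) <
      vonNeumannEntropy (Matrix.blockDiagonal fun v => outer fun y => C y v) := by
  have hdiag : (fun v => (Cᴴ * C) v v) = fun v => (((Cᴴ * C) v v).re : ℂ) :=
    funext fun v => (C.isHermitian_conjTranspose_mul_self.coe_re_apply_self v).symm
  calc vonNeumannEntropy (C * Cᴴ) = vonNeumannEntropy (Cᴴ * C) :=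
        vonNeumannEntropy_mul_conjTranspose_comm C
    _ < shannonEntropy fun v => ((Cᴴ * C) v v).re :=
        C.posSemidef_conjTranspose_mul_self.vonNeumannEntropy_lt_shannonEntropy_diag hvw h
    _ = vonNeumannEntropy (Matrix.diagonal fun v => (Cᴴ * C) v v) := by
        rw [hdiag, vonNeumannEntropy_diagonal]
    _ = vonNeumannEntropy (Matrix.blockDiagonal fun v => outer fun y => C y v) := by
        rw [← conjTranspose_columnBlocks_mul, ← vonNeumannEntropy_mul_conjTranspose_comm,
          columnBlocks_mul_conjTranspose]

end ColumnBlocks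

section CanonicalEmbedding

variable {α β : Type*} [Fintype β] {P : α × β → ℝ}

lemma margX_pos_of_pos {x : α} {y : β} (hP0 : ∀ p, 0 ≤ P p) (h : 0 < P (x, y)) :
    0 < margX P x :=
  h.trans_le (Finset.single_le_sum (fun y _ => hP0 (x, y)) (Finset.mem_univ y))

lemma margX_mul_condYX (hP0 : ∀ p, 0 ≤ P p) (x : α) (y : β) :
    margX P x * condYX P x y = P (x, y) := by
  rcases (hP0 (x, y)).lt_or_eq with h | h
  · exact mul_div_cancel₀ _ (margX_pos_of_pos hP0 h).ne'
  · simp [condYX, ← h]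

variable (P) in
def HasMixedOutput : Prop :=
  ∃ x x' y, 0 < P (x, y) ∧ 0 < P (x', y) ∧ condYX P x ≠ condYX P x'

variable [Fintype α] (P)

abbrev DepValue : Type _ := {v // v ∈ Finset.univ.image (condYX P)}

def depPart (x : α) : DepValue P := ⟨condYX P x, Finset.mem_image_of_mem _ (Finset.mem_univ x)⟩

def fiberWeight (v : DepValue P) : ℝ := ∑ x with condYX P x = v.1, margX P x

/-- Column `v` is `√(P(X↘Y = v)) • φ_x` for any `x` with `f_X(x) = v`. -/
def depFactor : Matrix β (DepValue P) ℂ :=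
  fun y v => ((Real.sqrt (fiberWeight P v) * Real.sqrt (v.1 y) : ℝ) : ℂ)

variable {P}

lemma fiberWeight_nonneg (hP0 : ∀ p, 0 ≤ P p) (v : DepValue P) : 0 ≤ fiberWeight P v :=
  Finset.sum_nonneg fun x _ => Finset.sum_nonneg fun y _ => hP0 (x, y)

lemma fiberWeight_depPart_pos {x : α} {y : β} (hP0 : ∀ p, 0 ≤ P p) (h : 0 < P (x, y)) :
    0 < fiberWeight P (depPart P x) :=
  (margX_pos_of_pos hP0 h).trans_le <| Finset.single_le_sum
    (fun x' _ => Finset.sum_nonneg fun y _ => hP0 (x', y))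
    (Finset.mem_filter.2 ⟨Finset.mem_univ x, rfl⟩)

lemma fiberBlock_eq_outer (hP0 : ∀ p, 0 ≤ P p) (v : DepValue P) :
    ∑ x with condYX P x = v.1, (margX P x : ℂ) • outer (phiX P x) =
      outer fun y => depFactor P y v := by
  ext y y'
  have hq := Real.mul_self_sqrt (fiberWeight_nonneg hP0 v)
  calc (∑ x with condYX P x = v.1, (margX P x : ℂ) • outer (phiX P x)) y y'
      = ∑ x with condYX P x = v.1,
          ((margX P x * (Real.sqrt (v.1 y) * Real.sqrt (v.1 y')) : ℝ) : ℂ) := by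
        rw [Matrix.sum_apply]
        refine Finset.sum_congr rfl fun x hx => ?_
        simp [outer, phiX, (Finset.mem_filter.1 hx).2]
    _ = outer (fun y => depFactor P y v) y y' := by
        rw [← Complex.ofReal_sum, ← Finset.sum_mul]
        simp only [outer, depFactor, Complex.conj_ofReal, ← Complex.ofReal_mul]
        rw [fiberWeight] at hq ⊢
        congr 1
        linear_combination (-(Real.sqrt (v.1 y) * Real.sqrt (v.1 y'))) * hq

lemma rhoXtB_eq (hP0 : ∀ p, 0 ≤ P p) :
    rhoXtB P = Matrix.blockDiagonal fun v => outer fun y => depFactor P y v := by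
  simp only [rhoXtB, fiberBlock_eq_outer hP0]

lemma rhoB_eq (hP0 : ∀ p, 0 ≤ P p) : rhoB P = depFactor P * (depFactor P)ᴴ := by
  rw [mul_conjTranspose_eq_sum_outer, ← Finset.sum_congr rfl fun v _ => fiberBlock_eq_outer hP0 v,
    rhoB, ← Finset.sum_fiberwise Finset.univ (depPart P)]
  simp only [depPart, Subtype.ext_iff]

lemma conjTranspose_depFactor_mul_apply_ne_zero (hP0 : ∀ p, 0 ≤ P p) {x x' : α} {y : β}
    (hx : 0 < P (x, y)) (hx' : 0 < P (x', y)) :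
    ((depFactor P)ᴴ * depFactor P) (depPart P x) (depPart P x') ≠ 0 := by
  have hpos (x : α) (hx : 0 < P (x, y)) :
      0 < Real.sqrt (fiberWeight P (depPart P x)) * Real.sqrt (condYX P x y) :=
    mul_pos (Real.sqrt_pos.2 (fiberWeight_depPart_pos hP0 hx))
      (Real.sqrt_pos.2 (div_pos hx (margX_pos_of_pos hP0 hx)))
  simp only [Matrix.mul_apply, Matrix.conjTranspose_apply, depFactor, RCLike.star_def,
    Complex.conj_ofReal, ← Complex.ofReal_mul, ← Complex.ofReal_sum, Complex.ofReal_ne_zero]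
  refine (Finset.sum_pos' (fun y _ => by positivity) ⟨y, Finset.mem_univ y, ?_⟩).ne'
  exact mul_pos (hpos x hx) (hpos x' hx')

end CanonicalEmbedding

section MixedOutput

variable {α β : Type*} [Fintype α] {P : α × β → ℝ}

lemma margY_mul_condXY (hP0 : ∀ p, 0 ≤ P p) (x : α) (y : β) :
    margY P y * condXY P y x = P (x, y) :=
  margX_mul_condYX (P := fun p => P p.swap) (fun p => hP0 p.swap) y x

lemma apply_eq_ite_of_forall_condXY_eq (hP0 : ∀ p, 0 ≤ P p)
    (hc : ∀ x y y', 0 < P (x, y) → 0 < P (x, y') → condXY P y = condXY P y')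
    {z : α} {y₀ : β} (hz : 0 < P (z, y₀)) (y : β) :
    P (z, y) = if condXY P y = condXY P y₀ then condXY P y₀ z * margY P y else 0 := by
  split_ifs with h
  · rw [← h, mul_comm, margY_mul_condXY hP0]
  · exact (hP0 _).eq_or_lt.elim Eq.symm fun hpos => absurd (hc z y y₀ hpos hz) h

variable [Fintype β]

lemma hasMixedOutput_of_depCondEntropyX_pos (hP0 : ∀ p, 0 ≤ P p)
    (h : 0 < depCondEntropyX P) : HasMixedOutput P := by
  by_contra hc
  simp only [HasMixedOutput, not_exists, not_and, not_not] at hc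
  refine h.ne' (neg_eq_zero.2 (Finset.sum_eq_zero fun ⟨x, y⟩ _ => ?_))
  rcases (hP0 (x, y)).lt_or_eq with hp | hp
  · have hfiber : ∑ x' with condYX P x' = condYX P x, P (x', y) = margY P y :=
      Finset.sum_filter_of_ne fun x' _ hx' => hc x' x y ((hP0 _).lt_of_ne' hx') hp
    have hY : margY P y ≠ 0 :=
      (hp.trans_le (Finset.single_le_sum (fun x _ => hP0 (x, y)) (Finset.mem_univ x))).ne'
    simp [hfiber, hY]
  · simp [← hp]

lemma condYX_eq_of_forall_condXY_eq (hP0 : ∀ p, 0 ≤ P p)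
    (hc : ∀ x y y', 0 < P (x, y) → 0 < P (x, y') → condXY P y = condXY P y')
    {z : α} {y₀ : β} (hz : 0 < P (z, y₀)) :
    condYX P z = fun y => if condXY P y = condXY P y₀ then
      margY P y / ∑ y' with condXY P y' = condXY P y₀, margY P y' else 0 := by
  have hrow := apply_eq_ite_of_forall_condXY_eq hP0 hc hz
  have hc₀ : 0 < condXY P y₀ z :=
    div_pos hz (hz.trans_le (Finset.single_le_sum (fun x _ => hP0 (x, y₀)) (Finset.mem_univ z)))
  have hmarg : margX P z = condXY P y₀ z * ∑ y' with condXY P y' = condXY P y₀, margY P y' := by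
    rw [margX, Finset.sum_congr rfl fun y _ => hrow y, ← Finset.sum_filter, Finset.mul_sum]
  funext y
  rw [condYX, hrow y, hmarg]
  split_ifs
  · exact mul_div_mul_left _ _ hc₀.ne'
  · exact zero_div _

lemma HasMixedOutput.swap (hP0 : ∀ p, 0 ≤ P p) (h : HasMixedOutput P) :
    HasMixedOutput fun p : β × α => P p.swap := by
  obtain ⟨x, x', y₀, hx, hx', hne⟩ := h
  by_contra hc
  simp only [HasMixedOutput, not_exists, not_and, not_not] at hc
  exact hne ((condYX_eq_of_forall_condXY_eq hP0 (fun x y y' => hc y y' x) hx).trans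
    (condYX_eq_of_forall_condXY_eq hP0 (fun x y y' => hc y y' x) hx').symm)

end MixedOutput

theorem vonNeumannEntropy_rhoB_lt_rhoXtB {α β : Type*} [Fintype α] [Fintype β] [DecidableEq β]
    {P : α × β → ℝ} (hP0 : ∀ p, 0 ≤ P p) (h : HasMixedOutput P) :
    vonNeumannEntropy (rhoB P) < vonNeumannEntropy (rhoXtB P) := by
  obtain ⟨x, x', y, hx, hx', hne⟩ := h
  rw [rhoB_eq hP0, rhoXtB_eq hP0]
  exact vonNeumannEntropy_mul_conjTranspose_lt_blockDiagonal _
    (fun h => hne (congrArg Subtype.val h)) (conjTranspose_depFactor_mul_apply_ne_zero hP0 hx hx')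

theorem canonical_embedding_nontrivial_general
    (P : 𝒳 × 𝒴 → ℝ) (hP0 : ∀ p, 0 ≤ P p)
    (hNT : 0 < depCondEntropyX P) :
    0 < vonNeumannEntropy (rhoXtB P) - vonNeumannEntropy (rhoB P) ∧
    0 < vonNeumannEntropy (rhoYtA P) - vonNeumannEntropy (rhoA P) := by
  have hmix := hasMixedOutput_of_depCondEntropyX_pos hP0 hNT
  have hswap := vonNeumannEntropy_rhoB_lt_rhoXtB (P := fun p : 𝒴 × 𝒳 => P p.swap)
    (fun p => hP0 p.swap) (hmix.swap hP0)
  rw [show rhoYtA P = rhoXtB fun p => P p.swap from rfl,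
    show rhoA P = rhoB fun p => P p.swap from rfl]
  exact ⟨sub_pos.2 (vonNeumannEntropy_rhoB_lt_rhoXtB hP0 hmix), sub_pos.2 hswap⟩

/-- the canonical embedding of a non-trivial primitive is a non-trivial
embedding: if `H(X↘Y | Y) > 0` then `S(X↘Y | B) > 0` and `S(Y↘X | A) > 0`. -/
theorem canonical_embedding_nontrivial
    (P : 𝒳 × 𝒴 → ℝ) (hP0 : ∀ p, 0 ≤ P p) (hP1 : ∑ p, P p = 1)
    (hNT : 0 < depCondEntropyX P) :
    0 < vonNeumannEntropy (rhoXtB P) - vonNeumannEntropy (rhoB P) ∧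
    0 < vonNeumannEntropy (rhoYtA P) - vonNeumannEntropy (rhoA P) :=
  canonical_embedding_nontrivial_general P hP0 hNT

end
end

section
/- Let r ≥ 1 and let P^{ROT^r} be the pmf on {0,1}^r × ({0,1}^r ∪ {⊥}) with P(x,y) = 2^{−(r+1)} if y = x or y = ⊥, and 0 otherwise (randomized Rabin string oblivious transfer). For every phase function θ, the regular embedding ψ_θ of P^{ROT^r} has reduced density matrix ρ_A = tr_B|ψ_θ⟩⟨ψ_θ| with eigenvalue 1/2 + 2^{−(r+1)} of multiplicity 1 and eigenvalue 2^{−(r+1)} of multiplicity 2^r − 1. Consequently the leakage of ψ_θ is independent of θ and equals Δ_r := −(1/2 + 2^{−(r+1)})·log₂(1/2 + 2^{−(r+1)}) + (2^r − 1)(r+1)·2^{−(r+1)} − r/2. In particular, for r = 1 every regular embedding of P^{ROT^1} has leakage exactly h(1/4) − 1/2 ≈ 0.311, where h is the binary entropy function. -/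
open scoped BigOperators
open Matrix
open scoped ComplexOrder

noncomputable section

/-- Partial trace over the first tensor factor (`tr_A`). -/
def trLeft {m n : Type*} [Fintype m] (ρ : Matrix (m × n) (m × n) ℂ) : Matrix n n ℂ :=
  fun i j => ∑ a, ρ (a, i) (a, j)

/-- Partial trace over the second tensor factor (`tr_B`). -/
def trRight {m n : Type*} [Fintype n] (ρ : Matrix (m × n) (m × n) ℂ) : Matrix m m ℂ :=
  fun i j => ∑ b, ρ (i, b) (j, b)

variable {𝒳 𝒴 : Type*} [Fintype 𝒳] [Fintype 𝒴] [DecidableEq 𝒳] [DecidableEq 𝒴]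

/-- Classical base-2 mutual information `I(X;Y) = H(X) + H(Y) − H(X,Y)`. -/
def mutualInfo (P : 𝒳 × 𝒴 → ℝ) : ℝ :=
  shannonEntropy (margX P) + shannonEntropy (margY P) - shannonEntropy P

/-- The regular embedding `|ψ_θ⟩ = Σ_{x,y} e^{iθ(x,y)} √P(x,y) |x⟩⊗|y⟩` of `P`. -/
def regEmbed (P : 𝒳 × 𝒴 → ℝ) (θ : 𝒳 × 𝒴 → ℝ) : 𝒳 × 𝒴 → ℂ :=
  fun p => Complex.exp ((θ p : ℂ) * Complex.I) * (Real.sqrt (P p) : ℂ)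

/-- The binary entropy function `h(q) = −q log₂ q − (1−q) log₂ (1−q)`. -/
def binEnt (q : ℝ) : ℝ := -q * Real.logb 2 q - (1 - q) * Real.logb 2 (1 - q)

/-- The Rabin string OT primitive `P^{ROT^r}`: a pmf on
`{0,1}^r × ({0,1}^r ∪ {⊥})`, with `⊥ = none`. -/
def Prot (r : ℕ) : (Fin r → Bool) × Option (Fin r → Bool) → ℝ := fun p =>
  match p.2 with
  | none => (2 : ℝ) ^ (-(r + 1 : ℤ))
  | some y => if y = p.1 then (2 : ℝ) ^ (-(r + 1 : ℤ)) else 0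

/-- The common leakage `Δ_r` of the regular embeddings of `P^{ROT^r}`. -/
def rotLeakage (r : ℕ) : ℝ :=
  -(1 / 2 + 2 ^ (-(r + 1 : ℤ))) * Real.logb 2 (1 / 2 + 2 ^ (-(r + 1 : ℤ))) +
    ((2 : ℝ) ^ r - 1) * (r + 1) * 2 ^ (-(r + 1 : ℤ)) - r / 2

/-!
Regard the bipartite state `ψ` as the matrix `M x y = ψ(x, y)`; then `ρ_A = M Mᴴ` and
`ρ_B = (Mᴴ M)ᵀ`. The characteristic polynomials of `M Mᴴ` and `Mᴴ M` agree up to a power of `X`,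
and zero eigenvalues contribute nothing to the entropy, so `S(ρ_B) = S(ρ_A)`.

For `P^{ROT^r}`, distinct rows `x ≠ x'` share only the column `y = ⊥`, so
`ρ_A = v vᴴ + 2^{-(r+1)} I` with `v x = ψ(x, ⊥)` and `‖v‖² = 1/2`. A rank-one perturbation of a
scalar has the eigenvalue `2^{-(r+1)} + ‖v‖²` once and `2^{-(r+1)}` with multiplicity `2^r - 1`,
whatever the phases are; the mutual information `r/2` is read off the marginals.
-/

open Polynomial

lemma trRight_outer_eq {m n : Type*} [Fintype n] (ψ : m × n → ℂ) :
    trRight (outer ψ) = of (Function.curry ψ) * (of (Function.curry ψ))ᴴ := by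
  ext i j
  simp [trRight, outer, mul_apply]

lemma trLeft_outer_eq {m n : Type*} [Fintype m] (ψ : m × n → ℂ) :
    trLeft (outer ψ) = ((of (Function.curry ψ))ᴴ * of (Function.curry ψ))ᵀ := by
  ext i j
  simp [trLeft, outer, mul_apply, mul_comm]

lemma trRight_outer_isHermitian {m n : Type*} [Fintype n] (ψ : m × n → ℂ) :
    (trRight (outer ψ)).IsHermitian := by
  rw [trRight_outer_eq]
  exact isHermitian_mul_conjTranspose_self _

section Spectrum

variable {m n : Type*} [Fintype m] [Fintype n] [DecidableEq m] [DecidableEq n]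

lemma Matrix.roots_charpoly_vecMulVec_add_scalar {R : Type*} [CommRing R] [IsDomain R]
    [Nonempty n] (v w : n → R) (a : R) :
    (vecMulVec v w + scalar n a).charpoly.roots =
      (a + v ⬝ᵥ w) ::ₘ Multiset.replicate (Fintype.card n - 1) a := by
  have hcard : Fintype.card n - 1 + 1 = Fintype.card n := Nat.sub_add_cancel Fintype.card_pos
  have hfactor : (vecMulVec v w).charpoly = X ^ (Fintype.card n - 1) * (X - C (v ⬝ᵥ w)) := by
    rw [charpoly_vecMulVec, ← hcard, pow_succ, smul_eq_C_mul, Nat.add_sub_cancel]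
    ring
  have hcomp : (vecMulVec v w + scalar n a).charpoly =
      (X - C a) ^ (Fintype.card n - 1) * (X - C (a + v ⬝ᵥ w)) := by
    rw [← sub_neg_eq_add, ← map_neg, charpoly_sub_scalar, hfactor]
    simp only [mul_comp, pow_comp, sub_comp, X_comp, C_comp, C_add, C_neg]
    ring
  rw [hcomp, roots_mul (mul_ne_zero (pow_ne_zero _ (X_sub_C_ne_zero a)) (X_sub_C_ne_zero _)),
    roots_pow, roots_X_sub_C, roots_X_sub_C, Multiset.nsmul_singleton, add_comm,
    Multiset.singleton_add]

lemma shannonEntropy_eq_neg_sum_map {α : Type*} [Fintype α] (p : α → ℝ) :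
    shannonEntropy p = -((Finset.univ.val.map p).map fun t => t * Real.logb 2 t).sum := by
  rw [shannonEntropy, Multiset.map_map]
  rfl

lemma vonNeumannEntropy_eq_neg_sum_roots {A : Matrix n n ℂ} (hA : A.IsHermitian) :
    vonNeumannEntropy A =
      -((A.charpoly.roots.map Complex.re).map fun t => t * Real.logb 2 t).sum := by
  rw [vonNeumannEntropy, dif_pos hA, shannonEntropy_eq_neg_sum_map,
    hA.roots_charpoly_eq_eigenvalues, Multiset.map_map]
  simp

lemma Matrix.IsHermitian.eigenvalues_map_eq_of_roots {A : Matrix n n ℂ} (hA : A.IsHermitian)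
    {s : Multiset ℝ} (h : A.charpoly.roots = s.map Complex.ofReal) :
    Finset.univ.val.map hA.eigenvalues = s := by
  apply Multiset.map_injective Complex.ofReal_injective
  rw [← h, hA.roots_charpoly_eq_eigenvalues, Multiset.map_map]
  rfl

lemma vonNeumannEntropy_eq_of_X_pow_mul_charpoly_eq {A : Matrix m m ℂ} {B : Matrix n n ℂ}
    (hA : A.IsHermitian) (hB : B.IsHermitian)
    (h : X ^ Fintype.card n * A.charpoly = X ^ Fintype.card m * B.charpoly) :
    vonNeumannEntropy A = vonNeumannEntropy B := by
  have hroots := congrArg roots h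
  rw [roots_mul (mul_ne_zero (pow_ne_zero _ X_ne_zero) A.charpoly_monic.ne_zero),
    roots_mul (mul_ne_zero (pow_ne_zero _ X_ne_zero) B.charpoly_monic.ne_zero),
    roots_X_pow, roots_X_pow] at hroots
  rw [vonNeumannEntropy_eq_neg_sum_roots hA, vonNeumannEntropy_eq_neg_sum_roots hB]
  simpa [Multiset.map_nsmul, Multiset.sum_nsmul] using
    congrArg (fun s => ((s.map Complex.re).map fun t => t * Real.logb 2 t).sum) hroots

lemma vonNeumannEntropy_eq_of_eigenvalues {A : Matrix n n ℂ} (hA : A.IsHermitian)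
    {s : Multiset ℝ} (h : Finset.univ.val.map hA.eigenvalues = s) :
    vonNeumannEntropy A = -(s.map fun t => t * Real.logb 2 t).sum := by
  rw [vonNeumannEntropy, dif_pos hA, shannonEntropy_eq_neg_sum_map, h]

theorem vonNeumannEntropy_trLeft_outer (ψ : m × n → ℂ) :
    vonNeumannEntropy (trLeft (outer ψ)) = vonNeumannEntropy (trRight (outer ψ)) := by
  rw [trLeft_outer_eq, trRight_outer_eq]
  refine vonNeumannEntropy_eq_of_X_pow_mul_charpoly_eq
    (isHermitian_conjTranspose_mul_self _).transpose (isHermitian_mul_conjTranspose_self _) ?_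
  rw [charpoly_transpose, charpoly_mul_comm']

end Spectrum

lemma regEmbed_mul_conj {α β : Type*} (P θ : α × β → ℝ) {p : α × β} (hp : 0 ≤ P p) :
    regEmbed P θ p * (starRingEnd ℂ) (regEmbed P θ p) = P p := by
  rw [Complex.mul_conj, Complex.normSq_eq_norm_sq, regEmbed, norm_mul,
    Complex.norm_exp_ofReal_mul_I, one_mul, Complex.norm_real,
    Real.norm_of_nonneg (Real.sqrt_nonneg _), Real.sq_sqrt hp]

lemma regEmbed_eq_zero {α β : Type*} (P θ : α × β → ℝ) {p : α × β} (hp : P p = 0) :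
    regEmbed P θ p = 0 := by
  simp [regEmbed, hp]

lemma logb_two_zpow (k : ℤ) : Real.logb 2 ((2 : ℝ) ^ k) = k := by
  rw [Real.logb, Real.log_zpow, mul_div_cancel_right₀ _ (Real.log_pos one_lt_two).ne']

section Rabin

variable (r : ℕ) (θ : (Fin r → Bool) × Option (Fin r → Bool) → ℝ)

lemma two_pow_mul_two_zpow_neg_succ : (2 : ℝ) ^ r * 2 ^ (-(r + 1 : ℤ)) = 1 / 2 := by
  rw [← zpow_natCast, ← zpow_add₀ two_ne_zero]
  norm_num

lemma card_bitstrings : Fintype.card (Fin r → Bool) = 2 ^ r := by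
  simp

lemma Prot_none (x : Fin r → Bool) : Prot r (x, none) = 2 ^ (-(r + 1 : ℤ)) := rfl

lemma Prot_some (x z : Fin r → Bool) :
    Prot r (x, some z) = if z = x then 2 ^ (-(r + 1 : ℤ)) else 0 := rfl

lemma Prot_nonneg (p : (Fin r → Bool) × Option (Fin r → Bool)) : 0 ≤ Prot r p := by
  rcases p with ⟨x, _ | z⟩
  · exact (zpow_pos two_pos _).le
  · rw [Prot_some]
    split_ifs
    exacts [(zpow_pos two_pos _).le, le_rfl]

lemma margY_Prot_none : margY (Prot r) none = 1 / 2 := by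
  rw [margY, Finset.sum_congr rfl fun x _ => Prot_none r x, Finset.sum_const, Finset.card_univ,
    card_bitstrings, nsmul_eq_mul, Nat.cast_pow, Nat.cast_two, two_pow_mul_two_zpow_neg_succ]

lemma regEmbed_Prot_some_of_ne {x z : Fin r → Bool} (h : z ≠ x) :
    regEmbed (Prot r) θ (x, some z) = 0 :=
  regEmbed_eq_zero _ _ (if_neg h)

lemma trRight_outer_regEmbed_Prot :
    trRight (outer (regEmbed (Prot r) θ)) =
      vecMulVec (fun x => regEmbed (Prot r) θ (x, none))
          (star fun x => regEmbed (Prot r) θ (x, none)) +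
        scalar _ (((2 : ℝ) ^ (-(r + 1 : ℤ)) : ℝ) : ℂ) := by
  ext x x'
  simp only [trRight, outer, Fintype.sum_option, Matrix.add_apply, vecMulVec_apply,
    Pi.star_apply, scalar_apply, diagonal_apply, Complex.star_def]
  congr 1
  rw [Finset.sum_eq_single x
    (fun z _ hz => by rw [regEmbed_Prot_some_of_ne r θ hz, zero_mul]) (by simp)]
  by_cases hx : x = x'
  · subst hx
    rw [regEmbed_mul_conj _ _ (Prot_nonneg r _), if_pos rfl, Prot_some, if_pos rfl]
  · rw [regEmbed_Prot_some_of_ne r θ hx, map_zero, mul_zero, if_neg hx]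

lemma dotProduct_star_regEmbed_Prot_none :
    (fun x => regEmbed (Prot r) θ (x, none)) ⬝ᵥ star (fun x => regEmbed (Prot r) θ (x, none))
      = 1 / 2 := by
  simp only [dotProduct, Pi.star_apply, Complex.star_def,
    regEmbed_mul_conj _ _ (Prot_nonneg r _)]
  rw [← Complex.ofReal_sum, show ∑ x, Prot r (x, none) = margY (Prot r) none from rfl,
    margY_Prot_none]
  norm_num

theorem eigenvalues_trRight_outer_regEmbed_Prot
    (h : (trRight (outer (regEmbed (Prot r) θ))).IsHermitian) :
    Finset.univ.val.map h.eigenvalues =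
      (1 / 2 + 2 ^ (-(r + 1 : ℤ)) : ℝ) ::ₘ
        Multiset.replicate (2 ^ r - 1) ((2 : ℝ) ^ (-(r + 1 : ℤ))) := by
  refine h.eigenvalues_map_eq_of_roots ?_
  rw [trRight_outer_regEmbed_Prot, roots_charpoly_vecMulVec_add_scalar,
    dotProduct_star_regEmbed_Prot_none, card_bitstrings, Multiset.map_cons,
    Multiset.map_replicate]
  push_cast
  rw [add_comm]

theorem vonNeumannEntropy_trRight_outer_regEmbed_Prot :
    vonNeumannEntropy (trRight (outer (regEmbed (Prot r) θ))) =
      -(1 / 2 + 2 ^ (-(r + 1 : ℤ))) * Real.logb 2 (1 / 2 + 2 ^ (-(r + 1 : ℤ))) +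
        ((2 : ℝ) ^ r - 1) * (r + 1) * 2 ^ (-(r + 1 : ℤ)) := by
  rw [vonNeumannEntropy_eq_of_eigenvalues (trRight_outer_isHermitian _)
    (eigenvalues_trRight_outer_regEmbed_Prot r θ _), Multiset.map_cons, Multiset.map_replicate,
    Multiset.sum_cons, Multiset.sum_replicate, nsmul_eq_mul, logb_two_zpow,
    Nat.cast_sub Nat.one_le_two_pow]
  push_cast
  ring

lemma margX_Prot (x : Fin r → Bool) : margX (Prot r) x = 2 ^ (-(r : ℤ)) := by
  rw [margX, Fintype.sum_option, Prot_none, Finset.sum_congr rfl fun z _ => Prot_some r x z,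
    Finset.sum_ite_eq' Finset.univ x, if_pos (Finset.mem_univ x), ← two_mul,
    show -(r : ℤ) = 1 + -(r + 1 : ℤ) by ring, zpow_add₀ two_ne_zero, zpow_one]

lemma margY_Prot_some (z : Fin r → Bool) : margY (Prot r) (some z) = 2 ^ (-(r + 1 : ℤ)) := by
  rw [margY, Finset.sum_congr rfl fun x _ => Prot_some r x z, Finset.sum_ite_eq Finset.univ z,
    if_pos (Finset.mem_univ z)]

lemma shannonEntropy_margX_Prot : shannonEntropy (margX (Prot r)) = r := by
  rw [shannonEntropy, Finset.sum_congr rfl fun x _ => by rw [margX_Prot], Finset.sum_const,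
    Finset.card_univ, card_bitstrings, nsmul_eq_mul, logb_two_zpow, Nat.cast_pow, Nat.cast_two,
    ← zpow_natCast, ← mul_assoc, ← zpow_add₀ two_ne_zero]
  simp

lemma shannonEntropy_margY_Prot : shannonEntropy (margY (Prot r)) = 1 / 2 + (r + 1) / 2 := by
  rw [shannonEntropy, Fintype.sum_option, margY_Prot_none,
    Finset.sum_congr rfl fun z _ => by rw [margY_Prot_some], Finset.sum_const, Finset.card_univ,
    card_bitstrings, nsmul_eq_mul, logb_two_zpow, one_div, Real.logb_inv,
    Real.logb_self_eq_one one_lt_two]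
  push_cast
  linear_combination ((r : ℝ) + 1) * two_pow_mul_two_zpow_neg_succ r

lemma shannonEntropy_Prot : shannonEntropy (Prot r) = r + 1 := by
  have hrow (x : Fin r → Bool) : ∑ y, Prot r (x, y) * Real.logb 2 (Prot r (x, y)) =
      2 * (2 ^ (-(r + 1 : ℤ)) * (-(r + 1 : ℝ))) := by
    rw [Fintype.sum_option, Finset.sum_eq_single x
      (fun z _ hz => by rw [Prot_some, if_neg hz, zero_mul]) (by simp),
      Prot_none, Prot_some, if_pos rfl, logb_two_zpow]
    push_cast
    ring
  rw [shannonEntropy, Fintype.sum_prod_type, Finset.sum_congr rfl fun x _ => hrow x,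
    Finset.sum_const, Finset.card_univ, card_bitstrings, nsmul_eq_mul]
  push_cast
  linear_combination (2 * (r : ℝ) + 2) * two_pow_mul_two_zpow_neg_succ r

theorem mutualInfo_Prot : mutualInfo (Prot r) = r / 2 := by
  rw [mutualInfo, shannonEntropy_margX_Prot, shannonEntropy_margY_Prot, shannonEntropy_Prot]
  ring

end Rabin

lemma rotLeakage_one : rotLeakage 1 = binEnt (1 / 4) - 1 / 2 := by
  have hquarter : Real.logb 2 (1 / 4) = -2 := by
    rw [show (1 / 4 : ℝ) = 2 ^ (-2 : ℤ) by norm_num, logb_two_zpow]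
    norm_num
  norm_num [rotLeakage, binEnt, hquarter]

theorem rot_regular_embedding_leakage_general (r : ℕ)
    (θ : (Fin r → Bool) × Option (Fin r → Bool) → ℝ) :
    (∃ h : (trRight (outer (regEmbed (Prot r) θ))).IsHermitian,
      Finset.univ.val.map h.eigenvalues =
        ((1 / 2 + 2 ^ (-(r + 1 : ℤ)) : ℝ)) ::ₘ
          Multiset.replicate (2 ^ r - 1) ((2 : ℝ) ^ (-(r + 1 : ℤ)))) ∧
    vonNeumannEntropy (trLeft (outer (regEmbed (Prot r) θ))) - mutualInfo (Prot r) =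
      rotLeakage r ∧
    (r = 1 →
      vonNeumannEntropy (trLeft (outer (regEmbed (Prot r) θ))) - mutualInfo (Prot r) =
        binEnt (1 / 4) - 1 / 2) := by
  have hleak : vonNeumannEntropy (trLeft (outer (regEmbed (Prot r) θ))) - mutualInfo (Prot r) =
      rotLeakage r := by
    rw [vonNeumannEntropy_trLeft_outer, vonNeumannEntropy_trRight_outer_regEmbed_Prot,
      mutualInfo_Prot, rotLeakage]
  refine ⟨⟨trRight_outer_isHermitian _, eigenvalues_trRight_outer_regEmbed_Prot r θ _⟩, hleak, ?_⟩
  rintro rfl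
  rw [hleak, rotLeakage_one]

/-- for every phase function `θ`, the reduced density matrix
`ρ_A = tr_B |ψ_θ⟩⟨ψ_θ|` of the regular embedding `ψ_θ` of `P^{ROT^r}` has eigenvalue
`1/2 + 2^{−(r+1)}` with multiplicity `1` and eigenvalue `2^{−(r+1)}` with multiplicity
`2^r − 1`; consequently the leakage of `ψ_θ` is independent of `θ` and equals `Δ_r`,
and for `r = 1` it equals `h(1/4) − 1/2`. -/
theorem rot_regular_embedding_leakage (r : ℕ) (hr : 1 ≤ r)
    (θ : (Fin r → Bool) × Option (Fin r → Bool) → ℝ) :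
    (∃ h : (trRight (outer (regEmbed (Prot r) θ))).IsHermitian,
      Finset.univ.val.map h.eigenvalues =
        ((1 / 2 + 2 ^ (-(r + 1 : ℤ)) : ℝ)) ::ₘ
          Multiset.replicate (2 ^ r - 1) ((2 : ℝ) ^ (-(r + 1 : ℤ)))) ∧
    vonNeumannEntropy (trLeft (outer (regEmbed (Prot r) θ))) - mutualInfo (Prot r) =
      rotLeakage r ∧
    (r = 1 →
      vonNeumannEntropy (trLeft (outer (regEmbed (Prot r) θ))) - mutualInfo (Prot r) =
        binEnt (1 / 4) - 1 / 2) :=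
  rot_regular_embedding_leakage_general r θ

end
end
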